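/- Let A be a non-unital non-associative algebra over ℚ whose multiplication ⬝ satisfies the left pre-Lie identity (x⬝y)⬝z − x⬝(y⬝z) = (y⬝x)⬝z − y⬝(x⬝z) for all x, y, z ∈ A, and let 𝒜 : ℕ → Submodule ℚ A be a grading of the product, i.e. x ∈ 𝒜 m and y ∈ 𝒜 n imply x⬝y ∈ 𝒜 (m+n). Let I be the two-sided ideal of A generated by all elements m·(x⬝y) + n·(y⬝x) with m, n ≥ 1, x ∈ 𝒜 m, y ∈ 𝒜 n. Then for all positive integers m, n, p and all x ∈ 𝒜 m, y ∈ 𝒜 n, z ∈ 𝒜 p, the element m·n·(x⬝(y⬝z)) + n·p·(y⬝(z⬝x)) + p·m·(z⬝(x⬝y)) lies in I. (Equivalently, on the quotient A/I the bracket [x̄, ȳ] := m·(x⬝y mod I) for homogeneous x of degree m is anti-symmetric and satisfies the Jacobi identity, so A/I is a Lie algebra.) -/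
import Mathlib


/-- A ℚ-submodule of a non-unital non-associative ℚ-algebra which is stable under left
and right multiplication by arbitrary elements: a two-sided ideal. -/
def IsTwoSidedIdealSubmodule {A : Type*} [NonUnitalNonAssocRing A] [Module ℚ A]
    (I : Submodule ℚ A) : Prop :=
  ∀ a x : A, x ∈ I → a * x ∈ I ∧ x * a ∈ I

/-- The smallest two-sided ideal (ℚ-submodule closed under left and right multiplication)
containing a given set. -/
def twoSidedIdealGen {A : Type*} [NonUnitalNonAssocRing A] [Module ℚ A]
    (S : Set A) : Submodule ℚ A :=
  sInf {I | IsTwoSidedIdealSubmodule I ∧ S ⊆ I}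

lemma twoSidedIdealGen_isIdeal {A : Type*} [NonUnitalNonAssocRing A] [Module ℚ A]
    (S : Set A) : IsTwoSidedIdealSubmodule (twoSidedIdealGen S) := by
  intro a x hx
  rw [twoSidedIdealGen, Submodule.mem_sInf] at hx
  constructor <;>
  · rw [twoSidedIdealGen, Submodule.mem_sInf]
    intro J hJ
    first
      | exact (hJ.1 a x (hx J hJ)).1
      | exact (hJ.1 a x (hx J hJ)).2

lemma subset_twoSidedIdealGen {A : Type*} [NonUnitalNonAssocRing A] [Module ℚ A]
    (S : Set A) : ∀ s ∈ S, s ∈ twoSidedIdealGen S := by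
  intro s hs
  rw [twoSidedIdealGen, Submodule.mem_sInf]
  intro J hJ
  exact hJ.2 hs

/-- In a graded left pre-Lie algebra over ℚ, the weighted Jacobi combinations
`m·n·(x⬝(y⬝z)) + n·p·(y⬝(z⬝x)) + p·m·(z⬝(x⬝y))` of homogeneous elements of positive
degrees lie in the two-sided ideal generated by the weighted anti-symmetry elements
`m·(x⬝y) + n·(y⬝x)`; equivalently the quotient by that ideal is a Lie algebra for the
bracket `[x̄,ȳ] = m·(x⬝y mod I)`. -/
theorem weighted_jacobi_mem_weighted_antisymmetry_ideal (A : Type*)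
    [NonUnitalNonAssocRing A] [Module ℚ A] [IsScalarTower ℚ A A] [SMulCommClass ℚ A A]
    (hpre : ∀ x y z : A, (x * y) * z - x * (y * z) = (y * x) * z - y * (x * z))
    (𝒜 : ℕ → Submodule ℚ A)
    (hgr : ∀ (m n : ℕ) (x y : A), x ∈ 𝒜 m → y ∈ 𝒜 n → x * y ∈ 𝒜 (m + n))
    (I : Submodule ℚ A)
    (hI : I = twoSidedIdealGen
      {v | ∃ (m n : ℕ) (x y : A), 1 ≤ m ∧ 1 ≤ n ∧ x ∈ 𝒜 m ∧ y ∈ 𝒜 n ∧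
        v = m • (x * y) + n • (y * x)}) :
    ∀ (m n p : ℕ) (x y z : A), 1 ≤ m → 1 ≤ n → 1 ≤ p →
      x ∈ 𝒜 m → y ∈ 𝒜 n → z ∈ 𝒜 p →
      (m * n) • (x * (y * z)) + (n * p) • (y * (z * x)) + (p * m) • (z * (x * y)) ∈ I := by
  intro m n p x y z hm hn hp hx hy hz
  set S : Set A := {v | ∃ (m n : ℕ) (x y : A), 1 ≤ m ∧ 1 ≤ n ∧ x ∈ 𝒜 m ∧ y ∈ 𝒜 n ∧
      v = m • (x * y) + n • (y * x)} with hS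
  subst hI
  have hideal := twoSidedIdealGen_isIdeal S
  have hsub := subset_twoSidedIdealGen S
  -- the four generator elements
  have g1 : (m : ℕ) • (x * z) + (p : ℕ) • (z * x) ∈ twoSidedIdealGen S :=
    hsub _ ⟨m, p, x, z, hm, hp, hx, hz, rfl⟩
  have g2 : (m : ℕ) • (x * y) + (n : ℕ) • (y * x) ∈ twoSidedIdealGen S :=
    hsub _ ⟨m, n, x, y, hm, hn, hx, hy, rfl⟩
  have g3 : ((n + m : ℕ)) • ((y * x) * z) + (p : ℕ) • (z * (y * x)) ∈ twoSidedIdealGen S :=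
    hsub _ ⟨n + m, p, y * x, z, le_trans hn (Nat.le_add_right n m), hp,
      hgr n m y x hy hx, hz, rfl⟩
  have g4 : (n : ℕ) • (y * x) + (m : ℕ) • (x * y) ∈ twoSidedIdealGen S :=
    hsub _ ⟨n, m, y, x, hn, hm, hy, hx, rfl⟩
  have t1 : y * ((m : ℕ) • (x * z) + (p : ℕ) • (z * x)) ∈ twoSidedIdealGen S :=
    (hideal y _ g1).1
  have t2 : ((m : ℕ) • (x * y) + (n : ℕ) • (y * x)) * z ∈ twoSidedIdealGen S :=
    (hideal z _ g2).2
  have t4 : z * ((n : ℕ) • (y * x) + (m : ℕ) • (x * y)) ∈ twoSidedIdealGen S :=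
    (hideal z _ g4).1
  have hsum : (n : ℕ) • (y * ((m : ℕ) • (x * z) + (p : ℕ) • (z * x)))
      + (n : ℕ) • (((m : ℕ) • (x * y) + (n : ℕ) • (y * x)) * z)
      - (n : ℕ) • (((n + m : ℕ)) • ((y * x) * z) + (p : ℕ) • (z * (y * x)))
      + (p : ℕ) • (z * ((n : ℕ) • (y * x) + (m : ℕ) • (x * y)))
      ∈ twoSidedIdealGen S := by
    exact Submodule.add_mem _ (Submodule.sub_mem _
      (Submodule.add_mem _ (nsmul_mem t1 n) (nsmul_mem t2 n))
      (nsmul_mem g3 n)) (nsmul_mem t4 p)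
  have key : (m * n) • (x * (y * z)) + (n * p) • (y * (z * x)) + (p * m) • (z * (x * y))
      = (n : ℕ) • (y * ((m : ℕ) • (x * z) + (p : ℕ) • (z * x)))
      + (n : ℕ) • (((m : ℕ) • (x * y) + (n : ℕ) • (y * x)) * z)
      - (n : ℕ) • (((n + m : ℕ)) • ((y * x) * z) + (p : ℕ) • (z * (y * x)))
      + (p : ℕ) • (z * ((n : ℕ) • (y * x) + (m : ℕ) • (x * y)))
      + (m * n) • ((x * (y * z)) - y * (x * z) - (x * y) * z + (y * x) * z) := by
    simp only [mul_add, add_mul, mul_smul_comm, smul_mul_assoc, smul_add, smul_sub,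
      smul_smul, add_smul]
    module
  have h0 : (x * (y * z)) - y * (x * z) - (x * y) * z + (y * x) * z = 0 := by
    have h := hpre x y z
    have h2 : (y * x) * z = (x * y) * z - x * (y * z) + y * (x * z) :=
      sub_eq_iff_eq_add.mp h.symm
    rw [h2]; abel
  rw [key, h0, smul_zero, add_zero]
  exact hsum
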